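/- arXiv:2006.08555 — 3 statements merged into one kernel-verified Lean document; each statement's English description precedes it below -/
import Mathlib

section
/- Let G be an antisymmetric real n×n matrix (payoff matrix of a symmetric zero-sum game), let σ be a Nash equilibrium mixed strategy (i.e., for all mixed strategies τ, τᵀGσ ≤ 0), and let σ' be another mixed strategy whose support does not contain the support of σ, such that every pure strategy π in the support of σ' satisfies 1_πᵀGσ' = 0. Then there exists a pure strategy π in the support of σ but not in the support of σ' with 1_πᵀGσ' ≥ 0. -/
open Matrix Finset

/-- A mixed strategy: nonnegative entries summing to 1. -/
def IsMixed {n : ℕ} (σ : Fin n → ℝ) : Prop :=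
  (∀ i, 0 ≤ σ i) ∧ ∑ i, σ i = 1

/-! If `σ` had no such pure strategy, then `σᵀGσ'` would be negative: on the support of `σ`,
the entries of `Gσ'` vanish inside the support of `σ'` and are negative outside it, and the
support of `σ` does leave that of `σ'`. But by antisymmetry `σᵀGσ' = -σ'ᵀGσ ≥ 0`, since `σ`
is a Nash equilibrium. -/

theorem Matrix.dotProduct_mulVec_eq_neg_of_transpose_eq_neg {ι R : Type*} [Fintype ι]
    [CommRing R] {G : Matrix ι ι R} (hG : Gᵀ = -G) (x y : ι → R) :
    x ⬝ᵥ (G *ᵥ y) = -(y ⬝ᵥ (G *ᵥ x)) := by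
  rw [dotProduct_mulVec, ← mulVec_transpose, hG, neg_mulVec, neg_dotProduct, dotProduct_comm]

theorem Matrix.dotProduct_neg_of_nonpos_on_support {ι R : Type*} [Fintype ι] [CommRing R]
    [LinearOrder R] [IsStrictOrderedRing R] {σ v : ι → R}
    (hσ : ∀ i, 0 ≤ σ i) (hv : ∀ i, 0 < σ i → v i ≤ 0) (hneg : ∃ i, 0 < σ i ∧ v i < 0) :
    σ ⬝ᵥ v < 0 := by
  obtain ⟨i₀, hσi₀, hvi₀⟩ := hneg
  have hterm : ∀ i ∈ univ, σ i * v i ≤ 0 := by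
    intro i _
    rcases (hσ i).eq_or_lt with hi | hi
    · simp [← hi]
    · exact mul_nonpos_of_nonneg_of_nonpos hi.le (hv i hi)
  calc σ ⬝ᵥ v = ∑ i, σ i * v i := rfl
    _ < ∑ _i : ι, (0 : R) :=
      sum_lt_sum hterm ⟨i₀, mem_univ _, mul_neg_of_pos_of_neg hσi₀ hvi₀⟩
    _ = 0 := sum_const_zero

theorem psro_support_expansion {n : ℕ} (G : Matrix (Fin n) (Fin n) ℝ)
    (hG : Gᵀ = -G)
    (σ σ' : Fin n → ℝ) (hσ : IsMixed σ) (hσ' : IsMixed σ')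
    (hNash : ∀ τ : Fin n → ℝ, IsMixed τ → τ ⬝ᵥ (G *ᵥ σ) ≤ 0)
    (hsupp : ¬ ({i | σ i > 0} ⊆ {i | σ' i > 0}))
    (hmeta : ∀ i, σ' i > 0 → (G *ᵥ σ') i = 0) :
    ∃ i, σ i > 0 ∧ ¬ σ' i > 0 ∧ 0 ≤ (G *ᵥ σ') i := by
  by_contra! h
  obtain ⟨i₀, hσi₀, hσ'i₀⟩ := Set.not_subset.mp hsupp
  replace hσ'i₀ : σ' i₀ ≤ 0 := not_lt.mp hσ'i₀
  have hnonneg : 0 ≤ σ ⬝ᵥ (G *ᵥ σ') := by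
    rw [dotProduct_mulVec_eq_neg_of_transpose_eq_neg hG]
    exact neg_nonneg.mpr (hNash σ' hσ')
  have hneg : σ ⬝ᵥ (G *ᵥ σ') < 0 := by
    refine dotProduct_neg_of_nonpos_on_support hσ.1 (fun i hi ↦ ?_)
      ⟨i₀, hσi₀, h i₀ hσi₀ hσ'i₀⟩
    rcases le_or_gt (σ' i) 0 with hi' | hi'
    · exact (h i hi hi').le
    · exact (hmeta i hi').le
  exact hneg.not_ge hnonneg
end

section
/- In the 4×4 game with antisymmetric payoff matrix G with rows [0, -1, 1, -2/5], [1, 0, -1, -2/5], [-1, 1, 0, -2/5], [2/5, 2/5, 2/5, 0], let σ be the uniform mixture (1/3, 1/3, 1/3, 0). Then for each i ∈ {1,2,3}, the best response (over all four pure strategies) to the strategy obtained by restricting σ to the pure strategies that strategy i beats or ties and renormalizing, is strategy i itself. Hence the Rectified PSRO expansion step adds no new strategy, yet σ is exploitable: e₄ᵀGσ = 2/5 > 0. -/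
open Matrix Finset

/-- The counterexample game: RPS plus a dominant fourth strategy. -/
noncomputable def Gex : Matrix (Fin 4) (Fin 4) ℝ :=
  !![0, -1, 1, -2/5;
     1, 0, -1, -2/5;
     -1, 1, 0, -2/5;
     2/5, 2/5, 2/5, 0]

/-- Restriction of σ to the pure strategies that strategy `i` beats or ties,
renormalized. -/
noncomputable def rectifiedOpponent (i : Fin 4) (σ : Fin 4 → ℝ) : Fin 4 → ℝ :=
  fun j => (if 0 ≤ Gex i j then σ j else 0) /
    (∑ k, if 0 ≤ Gex i k then σ k else 0)

theorem rectified_psro_stalls :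
    (∀ i : Fin 4, (i : ℕ) < 3 →
      ∀ k : Fin 4,
        (Gex *ᵥ rectifiedOpponent i ![1/3, 1/3, 1/3, 0]) k ≤
        (Gex *ᵥ rectifiedOpponent i ![1/3, 1/3, 1/3, 0]) i) ∧
    (Gex *ᵥ ![1/3, 1/3, 1/3, 0]) 3 = 2/5 := by
  constructor
  · intro i hi k
    fin_cases i <;> simp at hi <;> fin_cases k <;>
      simp [Gex, rectifiedOpponent, Matrix.mulVec, dotProduct, Fin.sum_univ_four] <;>
      norm_num
  · simp [Gex, Matrix.mulVec, dotProduct, Fin.sum_univ_four]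
    norm_num
end

section
/- The Double Oracle algorithm on a finite two-player zero-sum game terminates: the sequence of populations Π⁰ ⊂ Π¹ ⊂ ... strictly grows until it contains a population whose restricted Nash equilibrium is a Nash equilibrium of the full game. Formally, if at some iteration the best responses to the current meta Nash equilibrium (σ₁*, σ₂*) are already in the population, then (σ₁*, σ₂*) is a Nash equilibrium of the full game. -/
open Matrix Finset

theorem double_oracle_termination {m n : ℕ}
    (A : Matrix (Fin m) (Fin n) ℝ)
    (P₁ : Finset (Fin m)) (P₂ : Finset (Fin n))
    (σ₁ : Fin m → ℝ) (σ₂ : Fin n → ℝ)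
    (hσ₁ : IsMixed σ₁) (hσ₂ : IsMixed σ₂)
    (hsupp₁ : ∀ i, σ₁ i > 0 → i ∈ P₁)
    (hsupp₂ : ∀ j, σ₂ j > 0 → j ∈ P₂)
    (hmeta₁ : ∀ i ∈ P₁, (A *ᵥ σ₂) i ≤ σ₁ ⬝ᵥ (A *ᵥ σ₂))
    (hmeta₂ : ∀ j ∈ P₂, σ₁ ⬝ᵥ (A *ᵥ σ₂) ≤ (σ₁ ᵥ* A) j)
    (hbr₁ : ∃ i' ∈ P₁, ∀ i, (A *ᵥ σ₂) i ≤ (A *ᵥ σ₂) i')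
    (hbr₂ : ∃ j' ∈ P₂, ∀ j, (σ₁ ᵥ* A) j' ≤ (σ₁ ᵥ* A) j) :
    (∀ τ : Fin m → ℝ, IsMixed τ → τ ⬝ᵥ (A *ᵥ σ₂) ≤ σ₁ ⬝ᵥ (A *ᵥ σ₂)) ∧
    (∀ τ' : Fin n → ℝ, IsMixed τ' → σ₁ ⬝ᵥ (A *ᵥ σ₂) ≤ σ₁ ⬝ᵥ (A *ᵥ τ')) := by

  obtain ⟨i', hi'P, hi'⟩ := hbr₁
  obtain ⟨j', hj'P, hj'⟩ := hbr₂
  set v := σ₁ ⬝ᵥ (A *ᵥ σ₂) with hv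
  have hub : ∀ i, (A *ᵥ σ₂) i ≤ v := fun i => (hi' i).trans (hmeta₁ i' hi'P)
  have hlb : ∀ j, v ≤ (σ₁ ᵥ* A) j := fun j => (hmeta₂ j' hj'P).trans (hj' j)
  constructor
  · intro τ hτ
    calc τ ⬝ᵥ (A *ᵥ σ₂) = ∑ i, τ i * (A *ᵥ σ₂) i := rfl
      _ ≤ ∑ i, τ i * v := Finset.sum_le_sum (fun i _ =>
            mul_le_mul_of_nonneg_left (hub i) (hτ.1 i))
      _ = v := by rw [← Finset.sum_mul, hτ.2, one_mul]
  · intro τ' hτ'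
    have : σ₁ ⬝ᵥ (A *ᵥ τ') = (σ₁ ᵥ* A) ⬝ᵥ τ' := by
      rw [Matrix.dotProduct_mulVec]
    rw [this]
    calc v = ∑ j, τ' j * v := by rw [← Finset.sum_mul, hτ'.2, one_mul]
      _ ≤ ∑ j, τ' j * (σ₁ ᵥ* A) j := Finset.sum_le_sum (fun j _ =>
            mul_le_mul_of_nonneg_left (hlb j) (hτ'.1 j))
      _ = (σ₁ ᵥ* A) ⬝ᵥ τ' := by simp [dotProduct, mul_comm]
end
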